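/- There are no elements x, y, z of the field ℚ_11 of 11-adic numbers with (x, y, z) ≠ (0, 0, 0) such that 3x^5 + 4y^5 + 5z^5 = 0. -/

import Mathlib

/-!
Fifth powers modulo 11 lie in {0, 1, -1}, and no combination 3u + 4v + 5w with u, v, w in
{0, 1, -1}, not all zero, vanishes modulo 11. A nontrivial 11-adic zero, divided by its
coordinate of largest norm, becomes an 11-adic integral zero with a coordinate equal to 1;
its reduction modulo 11 would be a nontrivial zero modulo 11.
-/

instance : Fact (Nat.Prime 11) := ⟨by norm_num⟩

theorem ZMod.eq_zero_of_three_mul_pow_five_add_four_mul_pow_five_add_five_mul_pow_five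
    (u v w : ZMod 11) (h : 3 * u ^ 5 + 4 * v ^ 5 + 5 * w ^ 5 = 0) :
    u = 0 ∧ v = 0 ∧ w = 0 := by
  revert u v w
  decide

namespace Padic

variable {p : ℕ} [Fact p.Prime] {ι : Type*} [Fintype ι]

theorem eq_zero_of_diagonal_form_eq_zero (a : ι → ℤ) (n : ℕ)
    (hmod : ∀ u : ι → ZMod p, ∑ i, (a i : ZMod p) * u i ^ n = 0 → u = 0)
    (x : ι → ℚ_[p]) (hx : ∑ i, (a i : ℚ_[p]) * x i ^ n = 0) : x = 0 := by
  by_contra hne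
  obtain ⟨k, hk⟩ : ∃ k, x k ≠ 0 := by simpa [funext_iff] using hne
  have : Nonempty ι := ⟨k⟩
  obtain ⟨m, hm⟩ := Finite.exists_max fun i => ‖x i‖
  have hxm : x m ≠ 0 := norm_ne_zero_iff.mp ((norm_pos_iff.mpr hk).trans_le (hm k)).ne'
  let u : ι → ℤ_[p] := fun i => ⟨x i / x m, by
    rw [norm_div]; exact div_le_one_of_le₀ (hm i) (norm_nonneg _)⟩
  have hu_coe : ∀ i, (u i : ℚ_[p]) = x i / x m := fun _ => rfl
  have hu : ∑ i, (a i : ℤ_[p]) * u i ^ n = 0 := by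
    apply Subtype.coe_injective
    calc ((∑ i, (a i : ℤ_[p]) * u i ^ n : ℤ_[p]) : ℚ_[p])
        = (∑ i, (a i : ℚ_[p]) * x i ^ n) / x m ^ n := by
          simp only [PadicInt.coe_sum, PadicInt.coe_mul, PadicInt.coe_intCast,
            PadicInt.coe_pow, hu_coe, div_pow, mul_div_assoc', Finset.sum_div]
      _ = 0 := by rw [hx, zero_div]
  have hum : u m = 1 := Subtype.ext (div_self hxm)
  have hreduced := congrFun (hmod (fun i => PadicInt.toZMod (u i))
    (by simpa using congrArg PadicInt.toZMod hu)) m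
  simp [hum] at hreduced

end Padic

theorem no_Q11_points_3_4_5 :
    ¬ ∃ x y z : ℚ_[11], (x, y, z) ≠ (0, 0, 0) ∧
      3 * x ^ 5 + 4 * y ^ 5 + 5 * z ^ 5 = 0 := by
  rintro ⟨x, y, z, hne, heq⟩
  have hmod : ∀ u : Fin 3 → ZMod 11,
      ∑ i, ((![3, 4, 5] : Fin 3 → ℤ) i : ZMod 11) * u i ^ 5 = 0 → u = 0 := by
    intro u hu
    obtain ⟨h0, h1, h2⟩ :=
      ZMod.eq_zero_of_three_mul_pow_five_add_four_mul_pow_five_add_five_mul_pow_five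
        (u 0) (u 1) (u 2) (by simpa [Fin.sum_univ_three] using hu)
    ext i
    fin_cases i <;> assumption
  have hxyz := Padic.eq_zero_of_diagonal_form_eq_zero _ _ hmod ![x, y, z]
    (by simpa [Fin.sum_univ_three] using heq)
  exact hne (by simpa [funext_iff, Fin.forall_fin_succ] using hxyz)
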